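/- arXiv:2505.14408 — 3 statements merged into one kernel-verified Lean document; each statement's English description precedes it below -/
import Mathlib

section
/- Let T ≥ 1 and T_on ≥ 1 be integers and u : {0,1,…,T} → {0,1} a binary schedule for one unit (u 0 is the given initial status). Define the startup indicator s_t = max(u_t − u_{t−1}, 0) for 1 ≤ t ≤ T. Then the following are equivalent: (i) for all 1 ≤ t ≤ T, ∑_{τ = max(t − T_on, 0) + 1}^{t} s_τ ≤ u_t (the 3-bin minimum up time constraint); (ii) for all 1 ≤ t ≤ T and all τ with t + 1 ≤ τ ≤ min(t + T_on − 1, T), u_t − u_{t−1} ≤ u_τ (the 1-bin minimum up time constraint). -/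
/-- Equivalence of the 3-bin and 1-bin minimum up time constraints for a binary
schedule `u : {0,…,T} → {0,1}` with startup indicator `s t = max (u t − u (t−1)) 0`. -/
theorem min_up_time_3bin_iff_1bin
    (T Ton : ℕ) (hT : 1 ≤ T) (hTon : 1 ≤ Ton)
    (u : ℕ → ℝ) (hbin : ∀ t, t ≤ T → u t = 0 ∨ u t = 1) :
    (∀ t, 1 ≤ t → t ≤ T →
        ∑ τ ∈ Finset.Icc (t - Ton + 1) t, max (u τ - u (τ - 1)) 0 ≤ u t) ↔
    (∀ t τ, 1 ≤ t → t ≤ T → t + 1 ≤ τ → τ ≤ min (t + Ton - 1) T →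
        u t - u (t - 1) ≤ u τ) := by
  have hf : ∀ τ, 1 ≤ τ → τ ≤ T →
      (max (u τ - u (τ - 1)) 0 = 0 ∨
        (max (u τ - u (τ - 1)) 0 = 1 ∧ u τ = 1 ∧ u (τ - 1) = 0)) := by
    intro τ h1 h2
    rcases hbin τ (by omega) with h | h <;> rcases hbin (τ - 1) (by omega) with h' | h' <;>
      rw [h, h'] <;> norm_num
  constructor
  · intro h3 t τ ht1 htT hτ1 hτ2
    calc u t - u (t - 1) ≤ max (u t - u (t - 1)) 0 := le_max_left _ _
      _ ≤ ∑ σ ∈ Finset.Icc (τ - Ton + 1) τ, max (u σ - u (σ - 1)) 0 :=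
        Finset.single_le_sum (f := fun σ => max (u σ - u (σ - 1)) 0) (fun σ _ => le_max_right _ _) (Finset.mem_Icc.mpr (by omega))
      _ ≤ u τ := h3 τ (by omega) (by omega)
  · intro h1 t ht1 htT
    rcases hbin t (by omega) with hut | hut
    · -- u t = 0 : every term in the window vanishes
      have hz : ∀ σ ∈ Finset.Icc (t - Ton + 1) t, max (u σ - u (σ - 1)) 0 = 0 := by
        intro σ hσ
        rw [Finset.mem_Icc] at hσ
        rcases hf σ (by omega) (by omega) with h | ⟨hs, huσ, huσ'⟩
        · exact h
        · by_cases hσt : σ = t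
          · rw [hσt] at huσ; rw [hut] at huσ; norm_num at huσ
          · have := h1 σ t (by omega) (by omega) (by omega) (by omega)
            rw [huσ, huσ', hut] at this; norm_num at this
      rw [Finset.sum_eq_zero hz, hut]
    · -- u t = 1 : at most one startup in the window
      have huniq : ∀ a ∈ Finset.Icc (t - Ton + 1) t, ∀ b ∈ Finset.Icc (t - Ton + 1) t,
          max (u a - u (a - 1)) 0 ≠ 0 → max (u b - u (b - 1)) 0 ≠ 0 → a = b := by
        have key : ∀ a b, a ∈ Finset.Icc (t - Ton + 1) t → b ∈ Finset.Icc (t - Ton + 1) t →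
            a < b → max (u a - u (a - 1)) 0 ≠ 0 → max (u b - u (b - 1)) 0 ≠ 0 → False := by
          intro a b ha hb hab hfa hfb
          rw [Finset.mem_Icc] at ha hb
          rcases hf a (by omega) (by omega) with h | ⟨_, hua, hua'⟩
          · exact hfa h
          rcases hf b (by omega) (by omega) with h | ⟨_, hub, hub'⟩
          · exact hfb h
          by_cases hb1 : b = a + 1
          · have : u (b - 1) = u a := by rw [hb1]; norm_num
            rw [hub', hua] at this; norm_num at this
          · have := h1 a (b - 1) (by omega) (by omega) (by omega) (by omega)
            rw [hua, hua', hub'] at this; norm_num at this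
        intro a ha b hb hfa hfb
        rcases lt_trichotomy a b with h | h | h
        · exact absurd (key a b ha hb h hfa hfb) not_false
        · exact h
        · exact absurd (key b a hb ha h hfb hfa) not_false
      by_cases hex : ∃ σ ∈ Finset.Icc (t - Ton + 1) t, max (u σ - u (σ - 1)) 0 ≠ 0
      · obtain ⟨σ0, hσ0, hσ0ne⟩ := hex
        rw [← Finset.add_sum_erase _ _ hσ0]
        have hz : ∑ σ ∈ (Finset.Icc (t - Ton + 1) t).erase σ0,
            max (u σ - u (σ - 1)) 0 = 0 := by
          apply Finset.sum_eq_zero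
          intro σ hσ
          by_contra hne
          exact (Finset.ne_of_mem_erase hσ)
            (huniq σ (Finset.mem_of_mem_erase hσ) σ0 hσ0 hne hσ0ne)
        rw [hz, add_zero, hut]
        rw [Finset.mem_Icc] at hσ0
        rcases hf σ0 (by omega) (by omega) with h | ⟨hs, _, _⟩
        · exact absurd h hσ0ne
        · rw [hs]
      · push_neg at hex
        have hz : ∀ σ ∈ Finset.Icc (t - Ton + 1) t, max (u σ - u (σ - 1)) 0 = 0 := by
          intro σ hσ; exact not_not.mp (fun h => h (hex σ hσ))
        rw [Finset.sum_eq_zero hz, hut]; norm_num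
end

section
/- Let T ≥ 1 and T_off ≥ 1 be integers and u : {0,1,…,T} → {0,1} a binary schedule for one unit (u 0 is the given initial status). Define the shutdown indicator d_t = max(u_{t−1} − u_t, 0) for 1 ≤ t ≤ T. Then the following are equivalent: (i) for all 1 ≤ t ≤ T, ∑_{τ = max(t − T_off, 0) + 1}^{t} d_τ ≤ 1 − u_t (the 3-bin minimum down time constraint); (ii) for all 1 ≤ t ≤ T and all τ with t + 1 ≤ τ ≤ min(t + T_off − 1, T), u_{t−1} − u_t ≤ 1 − u_τ (the 1-bin minimum down time constraint). -/
/-- Equivalence of the 3-bin and 1-bin minimum down time constraints for a binary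
schedule `u : {0,…,T} → {0,1}` with shutdown indicator `d t = max (u (t−1) − u t) 0`. -/
theorem min_down_time_3bin_iff_1bin
    (T Toff : ℕ) (hT : 1 ≤ T) (hToff : 1 ≤ Toff)
    (u : ℕ → ℝ) (hbin : ∀ t, t ≤ T → u t = 0 ∨ u t = 1) :
    (∀ t, 1 ≤ t → t ≤ T →
        ∑ τ ∈ Finset.Icc (t - Toff + 1) t, max (u (τ - 1) - u τ) 0 ≤ 1 - u t) ↔
    (∀ t τ, 1 ≤ t → t ≤ T → t + 1 ≤ τ → τ ≤ min (t + Toff - 1) T →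
        u (t - 1) - u t ≤ 1 - u τ) := by
  have hd : ∀ τ, τ ≤ T →
      max (u (τ - 1) - u τ) 0 = 0 ∨
      (max (u (τ - 1) - u τ) 0 = 1 ∧ u (τ - 1) = 1 ∧ u τ = 0) := by
    intro τ h2
    rcases hbin (τ - 1) (le_trans (Nat.sub_le _ _) h2) with h0 | h0 <;>
      rcases hbin τ h2 with h1' | h1' <;> simp [h0, h1']
  constructor
  · intro h3 t τ ht1 htT hτ1 hτ2
    have hτT : τ ≤ T := le_trans hτ2 (min_le_right _ _)
    have hτtoff : τ ≤ t + Toff - 1 := le_trans hτ2 (min_le_left _ _)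
    have hub : u τ ≤ 1 := by rcases hbin τ hτT with h | h <;> simp [h]
    rcases hbin (t - 1) (le_trans (Nat.sub_le _ _) htT) with ha | ha <;>
      rcases hbin t htT with hb | hb
    · rw [ha, hb]; linarith
    · rw [ha, hb]; linarith
    · -- shutdown at t: u (t-1) = 1, u t = 0
      have hsum := h3 τ (by omega) hτT
      have htmem : t ∈ Finset.Icc (τ - Toff + 1) τ := by
        simp only [Finset.mem_Icc]; omega
      have hdt : max (u (t - 1) - u t) 0 = 1 := by rw [ha, hb]; norm_num
      have hle : max (u (t - 1) - u t) 0 ≤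
          ∑ σ ∈ Finset.Icc (τ - Toff + 1) τ, max (u (σ - 1) - u σ) 0 :=
        Finset.single_le_sum (f := fun σ => max (u (σ - 1) - u σ) 0)
          (fun σ _ => le_max_right _ _) htmem
      rw [ha, hb]
      rw [hdt] at hle
      linarith
    · rw [ha, hb]; linarith
  · intro h1 t ht1 htT
    set s := Finset.Icc (t - Toff + 1) t with hs
    have hmem : ∀ τ ∈ s, t - Toff + 1 ≤ τ ∧ τ ≤ t := by
      intro τ hτ; simpa [hs, Finset.mem_Icc] using hτ
    -- every nonzero term corresponds to a shutdown
    have hkey : ∀ τ ∈ s, max (u (τ - 1) - u τ) 0 ≠ 0 →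
        u (τ - 1) = 1 ∧ u τ = 0 ∧ max (u (τ - 1) - u τ) 0 = 1 := by
      intro τ hτ hne
      obtain ⟨h1', h2'⟩ := hmem τ hτ
      rcases hd τ (le_trans h2' htT) with h | ⟨hm, hu1, hu0⟩
      · exact absurd h hne
      · exact ⟨hu1, hu0, hm⟩
    rcases hbin t htT with hb | hb
    · -- u t = 0 : show at most one shutdown in the window
      have hcard : (s.filter fun τ => max (u (τ - 1) - u τ) 0 ≠ 0).card ≤ 1 := by
        apply Finset.card_le_one.2
        intro τ1 hτ1 τ2 hτ2
        simp only [Finset.mem_filter] at hτ1 hτ2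
        obtain ⟨ha1, ha0, _⟩ := hkey τ1 hτ1.1 hτ1.2
        obtain ⟨hb1, hb0, _⟩ := hkey τ2 hτ2.1 hτ2.2
        obtain ⟨hl1, hl1'⟩ := hmem τ1 hτ1.1
        obtain ⟨hl2, hl2'⟩ := hmem τ2 hτ2.1
        by_contra hne
        -- wlog τ1 < τ2
        have key : ∀ σ1 σ2, t - Toff + 1 ≤ σ1 → σ1 ≤ t → t - Toff + 1 ≤ σ2 →
            σ2 ≤ t → σ1 < σ2 → u (σ1 - 1) = 1 → u σ1 = 0 → u (σ2 - 1) = 1 →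
            u σ2 = 0 → False := by
          intro σ1 σ2 hg1 hg1' hg2 hg2' hlt hx1 hx0 hy1 hy0
          rcases Nat.lt_or_ge σ1 (σ2 - 1) with hc | hc
          · have := h1 σ1 (σ2 - 1) (by omega) (by omega) (by omega) (by omega)
            rw [hx1, hx0, hy1] at this; linarith
          · have : σ2 - 1 = σ1 := by omega
            rw [this] at hy1; rw [hy1] at hx0; linarith
        rcases Nat.lt_trichotomy τ1 τ2 with h | h | h
        · exact key τ1 τ2 hl1 hl1' hl2 hl2' h ha1 ha0 hb1 hb0
        · exact hne h
        · exact key τ2 τ1 hl2 hl2' hl1 hl1' h hb1 hb0 ha1 ha0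
      have hsum : ∑ τ ∈ s, max (u (τ - 1) - u τ) 0 =
          ((s.filter fun τ => max (u (τ - 1) - u τ) 0 ≠ 0).card : ℝ) := by
        rw [← Finset.sum_filter_ne_zero s]
        rw [Finset.sum_congr rfl (fun τ hτ => by
          simp only [Finset.mem_filter] at hτ
          exact (hkey τ hτ.1 hτ.2).2.2)]
        simp
      rw [hsum, hb]
      have : ((s.filter fun τ => max (u (τ - 1) - u τ) 0 ≠ 0).card : ℝ) ≤ 1 := by
        exact_mod_cast hcard
      linarith
    · -- u t = 1 : show no shutdown in the window at all
      have hzero : ∀ τ ∈ s, max (u (τ - 1) - u τ) 0 = 0 := by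
        intro τ hτ
        by_contra hne
        obtain ⟨hu1, hu0, _⟩ := hkey τ hτ hne
        obtain ⟨hl, hl'⟩ := hmem τ hτ
        rcases Nat.lt_or_ge τ t with hc | hc
        · have := h1 τ t (by omega) (by omega) (by omega) (by omega)
          rw [hu1, hu0, hb] at this; linarith
        · have : τ = t := le_antisymm hl' hc
          rw [this] at hu0; rw [hu0] at hb; linarith
      rw [Finset.sum_eq_zero hzero, hb]
      norm_num
end

section
/- Let N_D ≥ 1 be an integer, K : {1,…,N_D} → ℝ nondecreasing with K(1) ≥ 0, and let u be a binary (0/1-valued) function of time. Fix a period t and an integer k with 1 ≤ k ≤ N_D, and suppose u_t = 1, u_{t−j} = 0 for all 1 ≤ j ≤ k, and u_{t−k−1} = 1 (the unit starts up at t after being off for exactly k periods). Then the least real number S satisfying S ≥ 0 and S ≥ K(τ)·(u_t − ∑_{j=1}^{τ} u_{t−j}) for all τ ∈ {1,…,N_D} equals K(k). -/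
/-- If the unit starts up at period `t` after being off for exactly `k` periods
(`1 ≤ k ≤ N_D`), then the least startup cost `S` satisfying the 1-bin startup-cost
inequalities `S ≥ 0` and `S ≥ K τ · (u t − ∑_{j=1}^{τ} u (t−j))` for `τ = 1,…,N_D`
equals `K k`, where `K` is nondecreasing on `{1,…,N_D}` with `K 1 ≥ 0`. -/
theorem startup_cost_after_k_off_periods
    (ND : ℕ) (hND : 1 ≤ ND)
    (K : ℕ → ℝ)
    (hKmono : ∀ τ₁ τ₂, 1 ≤ τ₁ → τ₁ ≤ τ₂ → τ₂ ≤ ND → K τ₁ ≤ K τ₂)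
    (hK1 : 0 ≤ K 1)
    (u : ℤ → ℝ) (hbin : ∀ t, u t = 0 ∨ u t = 1)
    (t : ℤ) (k : ℕ) (hk1 : 1 ≤ k) (hkND : k ≤ ND)
    (hut : u t = 1)
    (hoff : ∀ j : ℕ, 1 ≤ j → j ≤ k → u (t - j) = 0)
    (hprev : u (t - k - 1) = 1) :
    IsLeast {S : ℝ | 0 ≤ S ∧ ∀ τ : ℕ, 1 ≤ τ → τ ≤ ND →
        K τ * (u t - ∑ j ∈ Finset.Icc 1 τ, u (t - j)) ≤ S} (K k) := by
  have hKk0 : 0 ≤ K k := le_trans hK1 (hKmono 1 k le_rfl hk1 hkND)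
  have hnn : ∀ s : ℤ, 0 ≤ u s := fun s => by rcases hbin s with h | h <;> simp [h]
  constructor
  · refine ⟨hKk0, fun τ hτ1 hτND => ?_⟩
    by_cases hτk : τ ≤ k
    · have hsum : ∑ j ∈ Finset.Icc 1 τ, u (t - j) = 0 := by
        apply Finset.sum_eq_zero
        intro j hj
        simp only [Finset.mem_Icc] at hj
        exact hoff j hj.1 (hj.2.trans hτk)
      rw [hsum, hut]
      simpa using hKmono τ k hτ1 hτk hkND
    · push_neg at hτk
      have hmem : k + 1 ∈ Finset.Icc 1 τ := by
        simp only [Finset.mem_Icc]; omega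
      have hsum : (1 : ℝ) ≤ ∑ j ∈ Finset.Icc 1 τ, u (t - j) := by
        have := Finset.single_le_sum (f := fun j : ℕ => u (t - j))
          (fun j _ => hnn _) hmem
        have heq : u (t - ((k + 1 : ℕ) : ℤ)) = 1 := by
          have : (t - ((k + 1 : ℕ) : ℤ)) = t - k - 1 := by push_cast; ring
          rw [this, hprev]
        linarith
      have hKτ : 0 ≤ K τ := le_trans hK1 (hKmono 1 τ le_rfl hτ1 hτND)
      have : K τ * (u t - ∑ j ∈ Finset.Icc 1 τ, u (t - j)) ≤ 0 := by
        apply mul_nonpos_of_nonneg_of_nonpos hKτ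
        rw [hut]; linarith
      linarith
  · rintro S ⟨hS0, hS⟩
    have := hS k hk1 hkND
    have hsum : ∑ j ∈ Finset.Icc 1 k, u (t - j) = 0 := by
      apply Finset.sum_eq_zero
      intro j hj
      simp only [Finset.mem_Icc] at hj
      exact hoff j hj.1 hj.2
    rw [hsum, hut] at this
    linarith
end
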